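/- Let Γ1 be a set of formulas and Γ2 = Γ1 ∪ {u_1 = u'_1, ..., u_n = u'_n} for a natural number n. If t !~_{Γ1} u_i and t !~_{Γ1} u'_i for all i = 1, ..., n, then t ≡_{Γ2} t' implies t ≡_{Γ1} t'. -/

import Mathlib

namespace CLKID

/-- Terms of the language: variables, the constant `0`, and the unary function `s`. -/
inductive Tm : Type where
  | var : ℕ → Tm
  | zero : Tm
  | s : Tm → Tm
deriving DecidableEq

/-- `sIter n t` is the term `s^n t`. -/
def sIter : ℕ → Tm → Tm
  | 0, t => t
  | n + 1, t => Tm.s (sIter n t)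

/-- Substitution on terms. -/
def Tm.subst (θ : ℕ → Tm) : Tm → Tm
  | .var x => θ x
  | .zero => .zero
  | .s t => .s (t.subst θ)

/-- Free variables of a term. -/
def Tm.fv : Tm → Set ℕ
  | .var x => {x}
  | .zero => ∅
  | .s t => t.fv

/-- Subterms of a term. -/
def Tm.sub : Tm → Set Tm
  | .var x => {Tm.var x}
  | .zero => {Tm.zero}
  | .s t => insert (Tm.s t) t.sub

/-- The variable of a term (`none` if the term is of the form `s^n 0`). -/
def Tm.varOf : Tm → Option ℕ
  | .var x => some x
  | .zero => none
  | .s t => t.varOf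

/-- Formulas: equations, the two inductive-predicate atoms `Add1`/`Add2`,
    and the usual first-order connectives and quantifiers. -/
inductive Fm : Type where
  | eq : Tm → Tm → Fm
  | add1 : Tm → Tm → Tm → Fm
  | add2 : Tm → Tm → Tm → Fm
  | not : Fm → Fm
  | and : Fm → Fm → Fm
  | or : Fm → Fm → Fm
  | imp : Fm → Fm → Fm
  | all : ℕ → Fm → Fm
  | ex : ℕ → Fm → Fm
deriving DecidableEq

/-- Substitution on formulas. -/
def Fm.subst (θ : ℕ → Tm) : Fm → Fm
  | .eq t u => .eq (t.subst θ) (u.subst θ)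
  | .add1 a b c => .add1 (a.subst θ) (b.subst θ) (c.subst θ)
  | .add2 a b c => .add2 (a.subst θ) (b.subst θ) (c.subst θ)
  | .not φ => .not (φ.subst θ)
  | .and φ ψ => .and (φ.subst θ) (ψ.subst θ)
  | .or φ ψ => .or (φ.subst θ) (ψ.subst θ)
  | .imp φ ψ => .imp (φ.subst θ) (ψ.subst θ)
  | .all x φ => .all x (φ.subst (Function.update θ x (Tm.var x)))
  | .ex x φ => .ex x (φ.subst (Function.update θ x (Tm.var x)))

/-- Free variables of a formula. -/
def Fm.fv : Fm → Set ℕ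
  | .eq t u => t.fv ∪ u.fv
  | .add1 a b c => a.fv ∪ b.fv ∪ c.fv
  | .add2 a b c => a.fv ∪ b.fv ∪ c.fv
  | .not φ => φ.fv
  | .and φ ψ => φ.fv ∪ ψ.fv
  | .or φ ψ => φ.fv ∪ ψ.fv
  | .imp φ ψ => φ.fv ∪ ψ.fv
  | .all x φ => φ.fv \ {x}
  | .ex x φ => φ.fv \ {x}

/-- Terms occurring in a formula. -/
def Fm.tms : Fm → Set Tm
  | .eq t u => t.sub ∪ u.sub
  | .add1 a b c => a.sub ∪ b.sub ∪ c.sub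
  | .add2 a b c => a.sub ∪ b.sub ∪ c.sub
  | .not φ => φ.tms
  | .and φ ψ => φ.tms ∪ ψ.tms
  | .or φ ψ => φ.tms ∪ ψ.tms
  | .imp φ ψ => φ.tms ∪ ψ.tms
  | .all _ φ => φ.tms
  | .ex _ φ => φ.tms

/-- The substitution `[x := t]`. -/
def sub1 (x : ℕ) (t : Tm) : ℕ → Tm := fun y => if y = x then t else Tm.var y

/-- The simultaneous substitution `[v1 := t, v2 := u]`. -/
def sub2 (v1 v2 : ℕ) (t u : Tm) : ℕ → Tm :=
  fun z => if z = v1 then t else if z = v2 then u else Tm.var z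

/-- `≡_Γ`: the smallest congruence relation on terms containing all pairs `(t, u)`
    with the equation `t = u` in `Γ`. -/
inductive EqvTm (Γ : Set Fm) : Tm → Tm → Prop where
  | base {t u : Tm} : Fm.eq t u ∈ Γ → EqvTm Γ t u
  | refl (t : Tm) : EqvTm Γ t t
  | symm {t u : Tm} : EqvTm Γ t u → EqvTm Γ u t
  | trans {t u v : Tm} : EqvTm Γ t u → EqvTm Γ u v → EqvTm Γ t v
  | sCongr {t u : Tm} : EqvTm Γ t u → EqvTm Γ (Tm.s t) (Tm.s u)

/-- `t ~_Γ u` : `s^n t ≡_Γ s^m u` for some naturals `n`, `m`. -/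
def DepTm (Γ : Set Fm) (t u : Tm) : Prop := ∃ n m : ℕ, EqvTm Γ (sIter n t) (sIter m u)

/-- A sequent: a pair of finite sets of formulas. -/
structure Seq where
  ant : Finset Fm
  suc : Finset Fm

/-- The antecedent of a sequent, as a set of formulas. -/
def antSet (S : Seq) : Set Fm := ↑S.ant

/-- `[Γ]` from Lemma on chains: `{ s^n t1 = s^n t2 | t1 = t2 ∈ Γ or t2 = t1 ∈ Γ }`. -/
def brkt (Γ : Set Fm) : Set Fm :=
  {φ | ∃ (n : ℕ) (t1 t2 : Tm), φ = Fm.eq (sIter n t1) (sIter n t2) ∧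
        (Fm.eq t1 t2 ∈ Γ ∨ Fm.eq t2 t1 ∈ Γ)}

/-- `B1(Γ ⊢ Δ)` : second arguments of `Add1` atoms in the consequent. -/
def B1 (S : Seq) : Set Tm := {b | ∃ a c, Fm.add1 a b c ∈ S.suc}

/-- `C(Γ ⊢ Δ)` : third arguments of `Add2` atoms in the antecedent
    or `Add1` atoms in the consequent. -/
def Cset (S : Seq) : Set Tm :=
  {c | (∃ a b, Fm.add2 a b c ∈ S.ant) ∨ (∃ a b, Fm.add1 a b c ∈ S.suc)}

/-- Index sequent. -/
def IndexSequent (S : Seq) : Prop :=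
  (∀ t ∈ B1 S, ∀ u ∈ Cset S, ¬ DepTm (antSet S) t u) ∧
  (∀ b ∈ B1 S, ∀ b' ∈ B1 S, ∀ n m : ℕ, EqvTm (antSet S) (sIter n b) (sIter m b') → n = m)

/-!
Call a term bad (`DepOnEqs`) if it is `~_{Γ1}`-related to a side of one of the added equations. Badness is
invariant under `≡_{Γ1}` and under `s`, so induction on the derivation shows that every pair
identified by `≡_{Γ2}` is either identified by `≡_{Γ1}` or consists of two bad terms. By
hypothesis `t` is not bad.
-/

lemma sIter_s (n : ℕ) (a : Tm) : sIter n (Tm.s a) = Tm.s (sIter n a) := by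
  induction n with
  | zero => rfl
  | succ k ih => simp only [sIter, ih]

lemma EqvTm.sIter {Γ : Set Fm} {a b : Tm} (h : EqvTm Γ a b) (n : ℕ) :
    EqvTm Γ (sIter n a) (sIter n b) := by
  induction n with
  | zero => exact h
  | succ k ih => exact EqvTm.sCongr ih

namespace DepTm

variable {Γ : Set Fm} {a b v : Tm}

lemma refl (Γ : Set Fm) (a : Tm) : DepTm Γ a a := ⟨0, 0, EqvTm.refl a⟩

lemma of_eqvTm_left (h : EqvTm Γ a b) (hd : DepTm Γ b v) : DepTm Γ a v := by
  obtain ⟨p, q, hpq⟩ := hd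
  exact ⟨p, q, (h.sIter p).trans hpq⟩

lemma s_left (hd : DepTm Γ a v) : DepTm Γ (Tm.s a) v := by
  obtain ⟨p, q, hpq⟩ := hd
  exact ⟨p, q + 1, by rw [sIter_s]; exact hpq.sCongr⟩

end DepTm

def DepOnEqs (Γ Δ : Set Fm) (x : Tm) : Prop :=
  ∃ l r, Fm.eq l r ∈ Δ ∧ (DepTm Γ x l ∨ DepTm Γ x r)

namespace DepOnEqs

variable {Γ Δ : Set Fm} {a b : Tm}

lemma of_eqvTm_left (h : EqvTm Γ a b) (hb : DepOnEqs Γ Δ b) : DepOnEqs Γ Δ a := by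
  obtain ⟨l, r, hlr, hd⟩ := hb
  exact ⟨l, r, hlr, hd.imp (DepTm.of_eqvTm_left h) (DepTm.of_eqvTm_left h)⟩

lemma s (ha : DepOnEqs Γ Δ a) : DepOnEqs Γ Δ (Tm.s a) := by
  obtain ⟨l, r, hlr, hd⟩ := ha
  exact ⟨l, r, hlr, hd.imp DepTm.s_left DepTm.s_left⟩

end DepOnEqs

theorem EqvTm.of_union {Γ Δ : Set Fm} {a b : Tm} (h : EqvTm (Γ ∪ Δ) a b) :
    EqvTm Γ a b ∨ (DepOnEqs Γ Δ a ∧ DepOnEqs Γ Δ b) := by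
  induction h with
  | @base l r hmem =>
    rcases hmem with hΓ | hΔ
    · exact Or.inl (EqvTm.base hΓ)
    · exact Or.inr ⟨⟨l, r, hΔ, Or.inl (DepTm.refl Γ l)⟩, ⟨l, r, hΔ, Or.inr (DepTm.refl Γ r)⟩⟩
  | refl a => exact Or.inl (EqvTm.refl a)
  | symm _ ih => exact ih.imp EqvTm.symm And.symm
  | trans _ _ ih₁ ih₂ =>
    rcases ih₁ with hab | ⟨ha, hb⟩ <;> rcases ih₂ with hbc | ⟨hb', hc⟩
    · exact Or.inl (hab.trans hbc)
    · exact Or.inr ⟨hb'.of_eqvTm_left hab, hc⟩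
    · exact Or.inr ⟨ha, hb.of_eqvTm_left hbc.symm⟩
    · exact Or.inr ⟨ha, hc⟩
  | sCongr _ ih => exact ih.imp EqvTm.sCongr (And.imp DepOnEqs.s DepOnEqs.s)

/-- If `t` is `~_{Γ1}`-unrelated to all `u_i` and `u'_i`, then
    adding the equations `u_i = u'_i` does not change `≡`-equalities from `t`. -/
theorem eqv_left_asp (Γ1 : Set Fm) (n : ℕ) (u u' : ℕ → Tm) (t t' : Tm)
    (hu : ∀ i, i < n → ¬ DepTm Γ1 t (u i) ∧ ¬ DepTm Γ1 t (u' i))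
    (h : EqvTm (Γ1 ∪ {φ | ∃ i, i < n ∧ φ = Fm.eq (u i) (u' i)}) t t') :
    EqvTm Γ1 t t' := by
  rcases h.of_union with h | ⟨⟨l, r, ⟨i, hi, heq⟩, hdep⟩, -⟩
  · exact h
  · obtain ⟨rfl, rfl⟩ := Fm.eq.inj heq
    exact absurd hdep (not_or.mpr (hu i hi))

end CLKID
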